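/- Define β*(r) = (1+3r)/2 for 0 < r ≤ 1/5 and β*(r) = √(1 - (max(1-2r,0))²) for r > 1/5; define β_IDJ*(r) = 1/2 + r for 0 < r ≤ 1/4 and 1 - (max(1-√r,0))² for r > 1/4; define β̄*(r) = min(1, (r+1)/2). Then for all r > 0: β̄*(r) ≤ β_IDJ*(r) ≤ β*(r). -/

import Mathlib

noncomputable def betaBar (r : ℝ) : ℝ := min 1 ((r + 1) / 2)

noncomputable def betaIDJ (r : ℝ) : ℝ :=
  if r ≤ 1 / 4 then 1 / 2 + r else 1 - (max (1 - Real.sqrt r) 0) ^ 2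

noncomputable def betaStar (r : ℝ) : ℝ :=
  if r ≤ 1 / 5 then (1 + 3 * r) / 2 else Real.sqrt (1 - (max (1 - 2 * r) 0) ^ 2)

/-!
Away from the breakpoints the boundaries are explicit: with `s = √r`, `β_IDJ* = 2s - s²` on
`(1/4, 1]` and `β* = √(4r(1 - r))` on `(1/5, 1/2]`, while `β_IDJ* ≤ 1 = β*` for `r ≥ 1/2`.
Each comparison then reduces to the sign of a quadratic:
`β̄* ≤ β_IDJ*` on `(1/4, 1]` is `(3s - 1)(s - 1) ≤ 0`,
`β_IDJ* ≤ β*` on `(1/5, 1/4]` is `(10r - 1)(2r - 1) ≤ 0`, and on `(1/4, 1/2]` it is `s ≤ 4/5`.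
-/

open Real

lemma betaIDJ_le_one (r : ℝ) : betaIDJ r ≤ 1 := by
  unfold betaIDJ
  split_ifs with h
  · linarith
  · nlinarith [sq_nonneg (max (1 - √r) 0)]

lemma betaIDJ_eq_one_of_one_le {r : ℝ} (hr : 1 ≤ r) : betaIDJ r = 1 := by
  have hs : 1 ≤ √r := one_le_sqrt.mpr hr
  rw [betaIDJ, if_neg (by linarith), max_eq_right (by linarith)]
  ring

lemma betaIDJ_eq_of_mem_Ioc {r : ℝ} (hr : r ∈ Set.Ioc (1 / 4) 1) :
    betaIDJ r = 2 * √r - r := by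
  have hs : √r ≤ 1 := sqrt_le_one.mpr hr.2
  rw [betaIDJ, if_neg (not_le.mpr hr.1), max_eq_left (by linarith)]
  nlinarith [sq_sqrt (show 0 ≤ r by linarith [hr.1])]

lemma betaStar_eq_one_of_half_le {r : ℝ} (hr : 1 / 2 ≤ r) : betaStar r = 1 := by
  rw [betaStar, if_neg (by linarith), max_eq_right (by linarith)]
  norm_num

lemma betaStar_eq_of_mem_Ioc {r : ℝ} (hr : r ∈ Set.Ioc (1 / 5) (1 / 2)) :
    betaStar r = √(4 * r * (1 - r)) := by
  rw [betaStar, if_neg (not_le.mpr hr.1), max_eq_left (by linarith [hr.2])]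
  ring_nf

lemma betaBar_le_betaIDJ {r : ℝ} (hr : 0 ≤ r) : betaBar r ≤ betaIDJ r := by
  rcases le_or_gt r (1 / 4) with h | h
  · rw [betaIDJ, if_pos h]
    exact (min_le_right _ _).trans (by linarith)
  rcases le_or_gt r 1 with h' | h'
  · rw [betaIDJ_eq_of_mem_Ioc ⟨h, h'⟩]
    refine (min_le_right _ _).trans ?_
    have hs : √r ^ 2 = r := sq_sqrt hr
    have hs_le : √r ≤ 1 := sqrt_le_one.mpr h'
    have hs_ge : 1 / 2 < √r := by nlinarith [sqrt_nonneg r]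
    nlinarith [mul_nonneg (by linarith : (0 : ℝ) ≤ 3 * √r - 1) (by linarith : 0 ≤ 1 - √r)]
  · rw [betaIDJ_eq_one_of_one_le h'.le]
    exact min_le_left _ _

lemma betaIDJ_le_betaStar {r : ℝ} (hr : 0 ≤ r) : betaIDJ r ≤ betaStar r := by
  rcases le_or_gt r (1 / 5) with h₁ | h₁
  · rw [betaIDJ, betaStar, if_pos (by linarith), if_pos h₁]
    linarith
  rcases le_or_gt (1 / 2) r with h₂ | h₂
  · rw [betaStar_eq_one_of_half_le h₂]
    exact betaIDJ_le_one r
  rw [betaStar_eq_of_mem_Ioc ⟨h₁, h₂.le⟩]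
  rcases le_or_gt r (1 / 4) with h₃ | h₃
  · rw [betaIDJ, if_pos h₃, le_sqrt (by linarith) (by nlinarith)]
    nlinarith [mul_nonneg (by linarith : (0 : ℝ) ≤ 10 * r - 1) (by linarith : 0 ≤ 1 - 2 * r)]
  · rw [betaIDJ_eq_of_mem_Ioc ⟨h₃, by linarith⟩]
    have hs : √r ^ 2 = r := sq_sqrt hr
    have hs_le : √r ≤ 4 / 5 := by nlinarith [sqrt_nonneg r]
    have hs_ge : 1 / 2 < √r := by nlinarith [sqrt_nonneg r]
    rw [le_sqrt (by nlinarith) (by nlinarith)]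
    nlinarith [mul_nonneg (mul_nonneg (sqrt_nonneg r) (sqrt_nonneg r))
      (mul_nonneg (sqrt_nonneg r) (by linarith : (0 : ℝ) ≤ 4 / 5 - √r))]

theorem boundaries_ordered (r : ℝ) (hr : 0 < r) :
    betaBar r ≤ betaIDJ r ∧ betaIDJ r ≤ betaStar r :=
  ⟨betaBar_le_betaIDJ hr.le, betaIDJ_le_betaStar hr.le⟩
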